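/- Let A be a finite set and let Δ, I : A → ℝ satisfy Δ(a) ≥ 0 and I(a) > 0 for every a ∈ A. Suppose π* belongs to the probability simplex D(A) and minimizes π ↦ (Σ_a π(a)Δ(a))² / (Σ_a π(a)I(a)) over D(A). Then for every real λ ≥ 2 and every q ∈ D(A), (Σ_a π*(a)Δ(a))^λ / (Σ_a π*(a)I(a)) ≤ 2^{λ−2} · (Σ_a q(a)Δ(a))^λ / (Σ_a q(a)I(a)). In other words, the minimizer of the squared information ratio is a 2^{λ−2}-approximate minimizer of the generalized information ratio Ψ_λ(π) = (Σ_a π(a)Δ(a))^λ / (Σ_a π(a)I(a)) for every λ ≥ 2. -/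

import Mathlib

/-!
Let `π*` minimize `Ψ₂(π) = ⟨π, Δ⟩² / ⟨π, I⟩` over the simplex. Comparing `π*` with the mixtures
`(1 - t) π* + t q` and letting `t → 0⁺` gives the first-order condition
`⟨π*, Δ⟩² (⟨π*, I⟩ + ⟨q, I⟩) ≤ 2 ⟨π*, Δ⟩ ⟨q, Δ⟩ ⟨π*, I⟩`, hence `⟨π*, Δ⟩ ≤ 2 ⟨q, Δ⟩`.
Then `Ψ_λ(π*) = Ψ₂(π*) ⟨π*, Δ⟩^(λ-2) ≤ Ψ₂(q) (2 ⟨q, Δ⟩)^(λ-2) = 2^(λ-2) Ψ_λ(q)`.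
-/

open Finset Filter Set Topology

lemma le_of_forall_mem_Ioc_le_add_mul {a b c : ℝ} (h : ∀ t ∈ Ioc (0 : ℝ) 1, a ≤ b + t * c) :
    a ≤ b := by
  have hlim : Tendsto (fun t : ℝ => b + t * c) (𝓝[>] 0) (𝓝 b) := by
    have : Tendsto (fun t : ℝ => b + t * c) (𝓝 0) (𝓝 (b + 0 * c)) :=
      (continuous_const.add (continuous_id.mul continuous_const)).tendsto 0
    simpa using this.mono_left nhdsWithin_le_nhds
  exact ge_of_tendsto hlim (eventually_of_mem (Ioc_mem_nhdsGT one_pos) h)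

lemma le_two_mul_of_forall_sq_div_le {D D' J J' : ℝ} (hD' : 0 ≤ D') (hJ : 0 < J) (hJ' : 0 < J')
    (h : ∀ t ∈ Ioc (0 : ℝ) 1,
      D ^ 2 / J ≤ ((1 - t) * D + t * D') ^ 2 / ((1 - t) * J + t * J')) :
    D ≤ 2 * D' := by
  have hfirst : D ^ 2 * J' + D ^ 2 * J - 2 * D * D' * J ≤ 0 := by
    refine le_of_forall_mem_Ioc_le_add_mul (c := (D' - D) ^ 2 * J) fun t ht => ?_
    obtain ⟨ht0, ht1⟩ := ht
    have hmix : 0 < (1 - t) * J + t * J' := by nlinarith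
    have hcleared := (div_le_div_iff₀ hJ hmix).1 (h t ⟨ht0, ht1⟩)
    have hscaled : t * (D ^ 2 * J' + D ^ 2 * J - 2 * D * D' * J) ≤
        t * (0 + t * ((D' - D) ^ 2 * J)) := by
      linarith -- `hcleared` expanded in powers of `t`
    exact le_of_mul_le_mul_left hscaled ht0
  rcases le_or_gt D 0 with hD0 | hDpos
  · linarith
  · nlinarith [mul_pos hDpos hJ, mul_pos (mul_pos hDpos hDpos) hJ']

lemma rpow_div_le_two_rpow_mul_of_le_two_mul {D D' J J' l : ℝ} (hD : 0 ≤ D) (hJ' : 0 ≤ J')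
    (hle : D ≤ 2 * D') (hratio : D ^ 2 / J ≤ D' ^ 2 / J') (hl : 2 ≤ l) :
    D ^ l / J ≤ 2 ^ (l - 2) * (D' ^ l / J') := by
  have hD' : 0 ≤ D' := by linarith
  have hsplit : ∀ x : ℝ, 0 ≤ x → x ^ l = x ^ 2 * x ^ (l - 2) := fun x hx => by
    rw [← Real.rpow_natCast x 2, ← Real.rpow_add' hx (by norm_num; linarith)]
    norm_num
  calc D ^ l / J = D ^ 2 / J * D ^ (l - 2) := by rw [hsplit D hD]; ring
    _ ≤ D' ^ 2 / J' * (2 * D') ^ (l - 2) :=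
        mul_le_mul hratio (Real.rpow_le_rpow hD hle (by linarith)) (by positivity) (by positivity)
    _ = 2 ^ (l - 2) * (D' ^ l / J') := by
        rw [Real.mul_rpow zero_le_two hD', hsplit D' hD']
        ring

section Simplex

variable {A : Type*} [Fintype A]

lemma sum_mul_pos_of_mem_stdSimplex {p I : A → ℝ} (hp : p ∈ stdSimplex ℝ A)
    (hI : ∀ a, 0 < I a) : 0 < ∑ a, p a * I a := by
  obtain ⟨a, ha⟩ : ∃ a, 0 < p a := by
    by_contra! h
    linarith [hp.2, sum_nonpos fun a (_ : a ∈ Finset.univ) => h a]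
  exact sum_pos' (fun b _ => mul_nonneg (hp.1 b) (hI b).le) ⟨a, mem_univ a, mul_pos ha (hI a)⟩

lemma sum_smul_add_smul_mul (p q f : A → ℝ) (t : ℝ) :
    ∑ a, ((1 - t) • p + t • q) a * f a = (1 - t) * ∑ a, p a * f a + t * ∑ a, q a * f a := by
  simp only [Pi.add_apply, Pi.smul_apply, smul_eq_mul, add_mul, sum_add_distrib, mul_assoc,
    mul_sum]

lemma sum_mul_le_two_mul_of_isMinOn {Δ I π q : A → ℝ} (hΔ : ∀ a, 0 ≤ Δ a) (hI : ∀ a, 0 < I a)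
    (hπ : π ∈ stdSimplex ℝ A) (hq : q ∈ stdSimplex ℝ A)
    (hmin : IsMinOn (fun p => (∑ a, p a * Δ a) ^ 2 / ∑ a, p a * I a) (stdSimplex ℝ A) π) :
    ∑ a, π a * Δ a ≤ 2 * ∑ a, q a * Δ a := by
  refine le_two_mul_of_forall_sq_div_le (sum_nonneg fun a _ => mul_nonneg (hq.1 a) (hΔ a))
    (sum_mul_pos_of_mem_stdSimplex hπ hI) (sum_mul_pos_of_mem_stdSimplex hq hI) fun t ht => ?_
  have hmix : (1 - t) • π + t • q ∈ stdSimplex ℝ A :=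
    convex_stdSimplex ℝ A hπ hq (by linarith [ht.2]) ht.1.le (by ring)
  simpa only [sum_smul_add_smul_mul] using isMinOn_iff.1 hmin _ hmix

end Simplex

/-- The minimizer of the squared information ratio over the probability simplex is a
`2^(λ-2)`-approximate minimizer of the generalized information ratio
`Ψ_λ(π) = (⟨π,Δ⟩)^λ / ⟨π,I⟩` for every real `λ ≥ 2`. -/
theorem ids_approx_minimizer_generalized_ratio
    {A : Type*} [Fintype A]
    (Δ I : A → ℝ)
    (hΔ : ∀ a, 0 ≤ Δ a) (hI : ∀ a, 0 < I a)
    (πstar : A → ℝ)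
    (hπstar : (∀ a, 0 ≤ πstar a) ∧ ∑ a, πstar a = 1)
    (hmin : ∀ π : A → ℝ, (∀ a, 0 ≤ π a) → ∑ a, π a = 1 →
      (∑ a, πstar a * Δ a) ^ 2 / (∑ a, πstar a * I a) ≤
        (∑ a, π a * Δ a) ^ 2 / (∑ a, π a * I a)) :
    ∀ l : ℝ, 2 ≤ l → ∀ q : A → ℝ, (∀ a, 0 ≤ q a) → ∑ a, q a = 1 →
      (∑ a, πstar a * Δ a) ^ l / (∑ a, πstar a * I a) ≤
        2 ^ (l - 2) * ((∑ a, q a * Δ a) ^ l / (∑ a, q a * I a)) := by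
  intro l hl q hq hq1
  have hq_mem : q ∈ stdSimplex ℝ A := ⟨hq, hq1⟩
  have hmin_on : IsMinOn (fun p => (∑ a, p a * Δ a) ^ 2 / ∑ a, p a * I a) (stdSimplex ℝ A)
      πstar := fun π hπ => hmin π hπ.1 hπ.2
  exact rpow_div_le_two_rpow_mul_of_le_two_mul
    (sum_nonneg fun a _ => mul_nonneg (hπstar.1 a) (hΔ a))
    (sum_mul_pos_of_mem_stdSimplex hq_mem hI).le
    (sum_mul_le_two_mul_of_isMinOn hΔ hI hπstar hq_mem hmin_on)
    (hmin q hq hq1) hl
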